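/- Let R be a commutative Noetherian ring and C a finitely generated R-module with Ext^1_R(C,C) = 0. Then a finitely generated R-module M is 1-C-torsionfree if and only if there exists a short exact sequence 0 → M → C₀ → N → 0 of finitely generated R-modules such that C₀ is a direct summand of a finite direct sum of copies of C and Ext^1_R(N, C) = 0. -/

import Mathlib

open CategoryTheory

noncomputable def ExtVanishes (A : Type) [CommRing A] (i : ℕ)
    (M : Type) [AddCommGroup M] [Module A M]
    (N : Type) [AddCommGroup N] [Module A N] : Prop :=
  Subsingleton ((((Ext A (ModuleCat.{0} A) i).obj (Opposite.op (ModuleCat.of A M))).obj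
    (ModuleCat.of A N)))

noncomputable def ExtMod (A : Type) [CommRing A] (i : ℕ)
    (M : Type) [AddCommGroup M] [Module A M]
    (N : Type) [AddCommGroup N] [Module A N] : ModuleCat.{0} A :=
  ((Ext A (ModuleCat.{0} A) i).obj (Opposite.op (ModuleCat.of A M))).obj (ModuleCat.of A N)

noncomputable def evalMap (A : Type) [CommRing A]
    (C : Type) [AddCommGroup C] [Module A C]
    (M : Type) [AddCommGroup M] [Module A M] :
    M →ₗ[A] ((M →ₗ[A] C) →ₗ[A] C) :=
  LinearMap.applyₗ

/-- `M` is `n`-`C`-torsionfree. (`n = 0` imposes no condition.) -/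
noncomputable def IsCTorsionfree (A : Type) [CommRing A]
    (C : Type) [AddCommGroup C] [Module A C]
    (M : Type) [AddCommGroup M] [Module A M] : ℕ → Prop
  | 0 => True
  | 1 => Function.Injective (evalMap A C M)
  | (m + 2) => Function.Bijective (evalMap A C M) ∧
      ∀ i : ℕ, 1 ≤ i → i ≤ m → ExtVanishes A i (M →ₗ[A] C) C

/-- `C` is an `n`-semidualizing `A`-module. -/
noncomputable def IsSemidualizing (A : Type) [CommRing A]
    (C : Type) [AddCommGroup C] [Module A C] : ℕ → Prop
  | 0 => True
  | 1 => Function.Injective (LinearMap.lsmul A C) ∧ ExtVanishes A 1 C C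
  | (m + 2) => Function.Bijective (LinearMap.lsmul A C) ∧
      ∀ i : ℕ, 1 ≤ i → i ≤ m + 2 → ExtVanishes A i C C

/-- `M` is `n`-`C`-spherical: `Ext^i(M,C) = 0` for `1 ≤ i ≤ n`. -/
noncomputable def IsCSpherical (A : Type) [CommRing A]
    (C : Type) [AddCommGroup C] [Module A C]
    (M : Type) [AddCommGroup M] [Module A M] (n : ℕ) : Prop :=
  ∀ i : ℕ, 1 ≤ i → i ≤ n → ExtVanishes A i M C

/-- `X` belongs to `add C`: it is a direct summand of a finite direct sum of copies of `C`. -/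
def MemAddC (A : Type) [CommRing A]
    (C : Type) [AddCommGroup C] [Module A C]
    (X : Type) [AddCommGroup X] [Module A X] : Prop :=
  ∃ (k : ℕ) (f : X →ₗ[A] (Fin k → C)) (g : (Fin k → C) →ₗ[A] X),
    g.comp f = LinearMap.id

/-- There is an exact sequence `0 → D_m → ⋯ → D_0 → M → 0` with all `D_i ∈ add C`. -/
noncomputable def HasCResolution (A : Type) [CommRing A]
    (C : Type) [AddCommGroup C] [Module A C]
    (M : Type) [AddCommGroup M] [Module A M] (m : ℕ) : Prop :=
  ∃ (D : ℕ → ModuleCat.{0} A) (d : ∀ i : ℕ, (D (i + 1)) →ₗ[A] (D i)) (ε : (D 0) →ₗ[A] M),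
    (∀ i : ℕ, i ≤ m → MemAddC A C (D i)) ∧
    (∀ i : ℕ, m < i → Subsingleton (D i)) ∧
    Function.Surjective ε ∧ Function.Exact (d 0) ε ∧
    (∀ i : ℕ, Function.Exact (d (i + 1)) (d i))

/-- `Cdim_A M`, the `add C`-resolution dimension of `M`, as an extended natural number. -/
noncomputable def cdim (A : Type) [CommRing A]
    (C : Type) [AddCommGroup C] [Module A C]
    (M : Type) [AddCommGroup M] [Module A M] : ℕ∞ :=
  sInf ((fun m : ℕ => (m : ℕ∞)) '' {m : ℕ | HasCResolution A C M m})

/-- `K` is a first syzygy of `M`: there is a short exact sequence `0 → K → P → M → 0`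
with `P` finitely generated projective. -/
def IsFirstSyzygy (A : Type) [CommRing A] (K M : ModuleCat.{0} A) : Prop :=
  ∃ (P : ModuleCat.{0} A) (ι : K →ₗ[A] P) (ε : P →ₗ[A] M),
    Module.Finite A P ∧ Module.Projective A P ∧
    Function.Injective ι ∧ Function.Exact ι ε ∧ Function.Surjective ε

/-- `K` is an `n`-th syzygy of `M`. -/
def IsNthSyzygy (A : Type) [CommRing A] : ℕ → ModuleCat.{0} A → ModuleCat.{0} A → Prop
  | 0, K, M => Nonempty (K ≃ₗ[A] M)
  | (n + 1), K, M => ∃ L : ModuleCat.{0} A, IsFirstSyzygy A K L ∧ IsNthSyzygy A n L M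

/-- Depth of a module over a Noetherian local ring:
`inf { i | Ext^i(k, N) ≠ 0 }`, as an extended natural number. -/
noncomputable def rdepth (A : Type) [CommRing A] [IsLocalRing A]
    (N : Type) [AddCommGroup N] [Module A N] : ℕ∞ :=
  sInf ((fun i : ℕ => (i : ℕ∞)) ''
    {i : ℕ | ¬ ExtVanishes A i (IsLocalRing.ResidueField A) N})

/-- `N` has finite injective dimension over `A`: it admits a finite injective coresolution. -/
noncomputable def HasFiniteInjDim (A : Type) [CommRing A]
    (N : Type) [AddCommGroup N] [Module A N] : Prop :=
  ∃ (m : ℕ) (D : ℕ → ModuleCat.{0} A) (δ : ∀ i : ℕ, (D i) →ₗ[A] (D (i + 1)))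
    (η : N →ₗ[A] (D 0)),
    (∀ i : ℕ, i ≤ m → Module.Injective A (D i)) ∧
    (∀ i : ℕ, m < i → Subsingleton (D i)) ∧
    Function.Injective η ∧ Function.Exact η (δ 0) ∧
    (∀ i : ℕ, Function.Exact (δ i) (δ (i + 1)))

/-- `N` has finite projective dimension over `A`: it admits a finite projective resolution. -/
noncomputable def HasFiniteProjDim (A : Type) [CommRing A]
    (N : Type) [AddCommGroup N] [Module A N] : Prop :=
  ∃ (m : ℕ) (D : ℕ → ModuleCat.{0} A) (d : ∀ i : ℕ, (D (i + 1)) →ₗ[A] (D i))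
    (ε : (D 0) →ₗ[A] N),
    (∀ i : ℕ, i ≤ m → Module.Projective A (D i)) ∧
    (∀ i : ℕ, m < i → Subsingleton (D i)) ∧
    Function.Surjective ε ∧ Function.Exact (d 0) ε ∧
    (∀ i : ℕ, Function.Exact (d (i + 1)) (d i))

/-- A regular local ring: a Noetherian local ring whose maximal ideal can be generated by
(Krull dimension)-many elements. -/
def IsRegularLocal (A : Type) [CommRing A] [IsLocalRing A] : Prop :=
  IsNoetherianRing A ∧ ∃ s : Finset A,
    Ideal.span (s : Set A) = IsLocalRing.maximalIdeal A ∧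
    (s.card : WithBot ℕ∞) = ringKrullDim A

/-- `M` admits an `n`-`C`-spherical approximation: a short exact sequence `0 → Y → X → M → 0`
with `X` finitely generated `n`-`C`-spherical and `Cdim Y < n`. -/
noncomputable def HasSphericalApprox (A : Type) [CommRing A]
    (C : Type) [AddCommGroup C] [Module A C]
    (M : Type) [AddCommGroup M] [Module A M] (n : ℕ) : Prop :=
  ∃ (X Y : ModuleCat.{0} A) (ι : ↥Y →ₗ[A] ↥X) (f : ↥X →ₗ[A] M),
    Module.Finite A ↥X ∧ Module.Finite A ↥Y ∧
    Function.Injective ι ∧ Function.Exact ι f ∧ Function.Surjective f ∧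
    IsCSpherical A C ↥X n ∧ cdim A C ↥Y < (n : ℕ∞)


/-!
If `λ_M` is injective, let `φ₁, …, φₙ` generate `Hom(M, C)` (finitely generated since `R` is
Noetherian). Then `f = (φᵢ) : M → Cⁿ` is injective and every map `M → C` extends along it, so
in the sequence `Hom(Cⁿ, C) → Hom(M, C) → Ext¹(N, C) → Ext¹(Cⁿ, C) = 0` for `N = coker f` the
connecting map vanishes and `Ext¹(N, C) = 0`. This is checked on a projective presentation
`P ↠ N`, where `Ext¹(N, C) = 0` says that every map from its kernel to `C` extends to `P`.
Conversely, if `M ⊆ C₀` with `C₀` a summand of `Cᵏ`, the coordinate maps `M → C` separate points.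
-/

theorem LinearMap.exists_comp_eq_of_surjective_of_ker_le {R A B D : Type} [Ring R]
    [AddCommGroup A] [Module R A] [AddCommGroup B] [Module R B] [AddCommGroup D] [Module R D]
    (ρ : A →ₗ[R] B) (hρ : Function.Surjective ρ) (δ : A →ₗ[R] D)
    (h : LinearMap.ker ρ ≤ LinearMap.ker δ) : ∃ χ : B →ₗ[R] D, χ ∘ₗ ρ = δ :=
  ⟨(LinearMap.ker ρ).liftQ δ h ∘ₗ (ρ.quotKerEquivOfSurjective hρ).symm.toLinearMap, by
    ext x; simp⟩

section PresentationCriterion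

variable {R : Type} [CommRing R] (C : Type) [AddCommGroup C] [Module R C]

def HomsFromKerExtend {P N : Type} [AddCommGroup P] [Module R P] [AddCommGroup N] [Module R N]
    (ε : P →ₗ[R] N) : Prop :=
  Function.Surjective (LinearMap.lcomp R C (LinearMap.ker ε).subtype)

variable {C}

theorem HomsFromKerExtend.of_projective {P₁ P₂ N : Type}
    [AddCommGroup P₁] [Module R P₁] [Module.Projective R P₁]
    [AddCommGroup P₂] [Module R P₂] [Module.Projective R P₂] [AddCommGroup N] [Module R N]
    {ε₁ : P₁ →ₗ[R] N} {ε₂ : P₂ →ₗ[R] N}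
    (hε₁ : Function.Surjective ε₁) (hε₂ : Function.Surjective ε₂)
    (H : HomsFromKerExtend C ε₁) : HomsFromKerExtend C ε₂ := by
  obtain ⟨α, hα⟩ := Module.projective_lifting_property ε₁ ε₂ hε₁
  obtain ⟨β, hβ⟩ := Module.projective_lifting_property ε₂ ε₁ hε₂
  have hβ_ker : ∀ x ∈ LinearMap.ker ε₁, β x ∈ LinearMap.ker ε₂ := fun x hx => by
    simpa [← LinearMap.comp_apply, hβ] using hx
  have hγ_ker : ∀ x, β (α x) - x ∈ LinearMap.ker ε₂ := fun x => by
    simp [← LinearMap.comp_apply ε₂ β, hβ, ← LinearMap.comp_apply ε₁ α, hα]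
  intro φ
  obtain ⟨ψ, hψ⟩ := H (φ ∘ₗ β.restrict hβ_ker)
  -- `ψ ∘ α` extends `φ ∘ (βα)`, which differs from `φ` by `φ ∘ (βα - 1)`, defined on all of `P₂`.
  refine ⟨ψ ∘ₗ α - φ ∘ₗ (β ∘ₗ α - LinearMap.id).codRestrict _ hγ_ker, ?_⟩
  ext ⟨k, hk⟩
  have hαk : α k ∈ LinearMap.ker ε₁ := by simpa [← LinearMap.comp_apply, hα] using hk
  have hψk : ψ (α k) = φ ⟨β (α k), hβ_ker _ hαk⟩ := LinearMap.congr_fun hψ ⟨α k, hαk⟩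
  have hsplit : (⟨β (α k), hβ_ker _ hαk⟩ : LinearMap.ker ε₂) =
      ⟨β (α k) - k, hγ_ker k⟩ + ⟨k, hk⟩ := by
    ext; simp
  show ψ (α k) - φ ⟨β (α k) - k, hγ_ker k⟩ = φ ⟨k, hk⟩
  rw [hψk, hsplit, map_add, add_sub_cancel_left]

theorem HomsFromKerExtend.piMap {ι : Type} [Fintype ι] [DecidableEq ι] {P N : ι → Type}
    [∀ i, AddCommGroup (P i)] [∀ i, Module R (P i)] [∀ i, AddCommGroup (N i)]
    [∀ i, Module R (N i)] {ε : ∀ i, P i →ₗ[R] N i} (H : ∀ i, HomsFromKerExtend C (ε i)) :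
    HomsFromKerExtend C (LinearMap.piMap ε) := by
  have mem_ker : ∀ x, x ∈ LinearMap.ker (LinearMap.piMap ε) ↔ ∀ i, x i ∈ LinearMap.ker (ε i) :=
    fun x => by simp [funext_iff]
  have single_mem : ∀ i (v : LinearMap.ker (ε i)),
      (Pi.single i v.1 : ∀ j, P j) ∈ LinearMap.ker (LinearMap.piMap ε) := fun i v => by
    rw [mem_ker]
    intro j
    by_cases h : j = i
    · subst h; simp
    · simp [Pi.single_eq_of_ne h]
  let e i : LinearMap.ker (ε i) →ₗ[R] LinearMap.ker (LinearMap.piMap ε) :=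
    (LinearMap.single R P i ∘ₗ (LinearMap.ker (ε i)).subtype).codRestrict _ (single_mem i)
  intro φ
  choose ψ hψ using fun i => H i (φ ∘ₗ e i)
  refine ⟨∑ i, ψ i ∘ₗ LinearMap.proj i, ?_⟩
  ext ⟨k, hk⟩
  have hk' := (mem_ker k).1 hk
  have hsum : (⟨k, hk⟩ : LinearMap.ker (LinearMap.piMap ε)) = ∑ i, e i ⟨k i, hk' i⟩ := by
    ext1
    rw [Submodule.coe_sum]
    exact (Finset.univ_sum_single k).symm
  have hψk : ∀ i, ψ i (k i) = φ (e i ⟨k i, hk' i⟩) := fun i =>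
    LinearMap.congr_fun (hψ i) ⟨k i, hk' i⟩
  calc LinearMap.lcomp R C (LinearMap.ker (LinearMap.piMap ε)).subtype
        (∑ i, ψ i ∘ₗ LinearMap.proj i) ⟨k, hk⟩ = ∑ i, ψ i (k i) := by
        simp [LinearMap.sum_apply]
    _ = ∑ i, φ (e i ⟨k i, hk' i⟩) := by simp only [hψk]
    _ = φ ⟨k, hk⟩ := by rw [← map_sum, ← hsum]

theorem HomsFromKerExtend.comp {M V P N : Type} [AddCommGroup M] [Module R M]
    [AddCommGroup V] [Module R V] [AddCommGroup P] [Module R P] [AddCommGroup N] [Module R N]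
    {f : M →ₗ[R] V} {g : V →ₗ[R] N} (hf : Function.Injective f) (hfg : Function.Exact f g)
    (hres : Function.Surjective (LinearMap.lcomp R C f))
    {p : P →ₗ[R] V} (hp : Function.Surjective p) (H : HomsFromKerExtend C p) :
    HomsFromKerExtend C (g ∘ₗ p) := by
  have hle : LinearMap.ker p ≤ LinearMap.ker (g ∘ₗ p) := LinearMap.ker_le_ker_comp p g
  have hrange : ∀ x : LinearMap.ker (g ∘ₗ p), p x ∈ LinearMap.range f := fun x =>
    hfg.linearMap_ker_eq ▸ x.2
  let ρ : LinearMap.ker (g ∘ₗ p) →ₗ[R] M := (LinearEquiv.ofInjective f hf).symm.toLinearMap ∘ₗ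
    (p ∘ₗ (LinearMap.ker (g ∘ₗ p)).subtype).codRestrict _ hrange
  have hfρ : ∀ x, f (ρ x) = p x := fun x => LinearEquiv.ofInjective_symm_apply (h := hf) f _
  have hρ : Function.Surjective ρ := fun m => by
    obtain ⟨y, hy⟩ := hp (f m)
    have hy' : y ∈ LinearMap.ker (g ∘ₗ p) := by simp [hy, hfg.apply_apply_eq_zero]
    exact ⟨⟨y, hy'⟩, hf (by rw [hfρ, hy])⟩
  intro φ
  obtain ⟨ψ, hψ⟩ := H (φ ∘ₗ Submodule.inclusion hle)
  -- `φ - ψ` vanishes on `ker p`, hence factors through `ker (g ∘ p) ↠ M` and extends along `f`.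
  let δ := φ - ψ ∘ₗ (LinearMap.ker (g ∘ₗ p)).subtype
  obtain ⟨χ, hχ⟩ := LinearMap.exists_comp_eq_of_surjective_of_ker_le ρ hρ δ fun x hx => by
    have hxp : x.1 ∈ LinearMap.ker p := by
      simpa [← hfρ] using congrArg f (LinearMap.mem_ker.1 hx)
    have hψx : ψ x = φ x := LinearMap.congr_fun hψ ⟨x, hxp⟩
    show φ x - ψ x = 0
    rw [hψx, sub_self]
  obtain ⟨θ, rfl⟩ := hres χ
  refine ⟨ψ + θ ∘ₗ p, ?_⟩
  ext x
  show ψ x + θ (p x) = φ x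
  have hθ : θ (f (ρ x)) = φ x - ψ x := LinearMap.congr_fun hχ x
  rw [← hfρ, hθ, add_sub_cancel]

theorem homsFromKerExtend_iff_of_exact {Q₂ Q₁ Q₀ N : Type} [AddCommGroup Q₂] [Module R Q₂]
    [AddCommGroup Q₁] [Module R Q₁] [AddCommGroup Q₀] [Module R Q₀] [AddCommGroup N] [Module R N]
    {d₂ : Q₂ →ₗ[R] Q₁} {d₁ : Q₁ →ₗ[R] Q₀} {ε : Q₀ →ₗ[R] N}
    (h₂₁ : Function.Exact d₂ d₁) (h₁₀ : Function.Exact d₁ ε) :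
    HomsFromKerExtend C ε ↔ ∀ φ : Q₁ →ₗ[R] C, φ ∘ₗ d₂ = 0 → ∃ ψ : Q₀ →ₗ[R] C, ψ ∘ₗ d₁ = φ := by
  let d : Q₁ →ₗ[R] LinearMap.ker ε :=
    d₁.codRestrict _ fun x => h₁₀.apply_apply_eq_zero x
  have hd : Function.Surjective d := fun ⟨y, hy⟩ => by
    obtain ⟨x, rfl⟩ := (h₁₀ y).1 hy
    exact ⟨x, rfl⟩
  have hker : LinearMap.ker d = LinearMap.range d₂ := by
    rw [← h₂₁.linearMap_ker_eq]
    ext x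
    exact Subtype.ext_iff
  constructor
  · intro H φ hφ
    obtain ⟨φ', rfl⟩ := LinearMap.exists_comp_eq_of_surjective_of_ker_le d hd φ <| by
      rw [hker]; rintro _ ⟨y, rfl⟩; exact LinearMap.congr_fun hφ y
    obtain ⟨ψ, rfl⟩ := H φ'
    exact ⟨ψ, rfl⟩
  · intro H φ'
    obtain ⟨ψ, hψ⟩ := H (φ' ∘ₗ d) <| by
      ext y
      show φ' (d (d₂ y)) = 0
      rw [show d (d₂ y) = 0 from Subtype.ext (h₂₁.apply_apply_eq_zero y), map_zero]
    refine ⟨ψ, LinearMap.ext fun ⟨y, hy⟩ => ?_⟩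
    obtain ⟨x, hx⟩ := hd ⟨y, hy⟩
    rw [← hx]
    exact LinearMap.congr_fun hψ x

theorem extVanishes_one_iff_of_projectiveResolution {N : Type} [AddCommGroup N] [Module R N]
    (Q : ProjectiveResolution (ModuleCat.of R N)) :
    ExtVanishes R 1 N C ↔ ∀ φ : Q.complex.X 1 →ₗ[R] C, φ ∘ₗ (Q.complex.d 2 1).hom = 0 →
      ∃ ψ : Q.complex.X 0 →ₗ[R] C, ψ ∘ₗ (Q.complex.d 1 0).hom = φ := by
  rw [ExtVanishes, ← ModuleCat.isZero_iff_subsingleton, (Q.isoExt 1 _).isZero_iff,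
    ← HomologicalComplex.exactAt_iff_isZero_homology,
    HomologicalComplex.exactAt_iff' _ 0 1 2 (by simp) (by simp),
    ShortComplex.moduleCat_exact_iff]
  refine ⟨fun h φ hφ => ?_, fun h φ hφ => ?_⟩
  · obtain ⟨ψ, hψ⟩ := h (ModuleCat.ofHom φ) (ModuleCat.hom_ext hφ)
    exact ⟨ψ.hom, congrArg ModuleCat.Hom.hom hψ⟩
  · obtain ⟨ψ, hψ⟩ := h φ.hom (congrArg ModuleCat.Hom.hom hφ)
    exact ⟨ModuleCat.ofHom ψ, ModuleCat.hom_ext hψ⟩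

theorem extVanishes_one_iff_homsFromKerExtend {P N : Type} [AddCommGroup P] [Module R P]
    [Module.Projective R P] [AddCommGroup N] [Module R N] {ε : P →ₗ[R] N}
    (hε : Function.Surjective ε) :
    ExtVanishes R 1 N C ↔ HomsFromKerExtend C ε := by
  let Q := ProjectiveResolution.of (ModuleCat.of R N)
  have : Module.Projective R (Q.complex.X 0) :=
    (IsProjective.iff_projective _).mpr (inferInstanceAs (Projective (Q.complex.X 0)))
  have hπ : Function.Surjective (Q.π.f 0).hom :=
    (ModuleCat.epi_iff_surjective _).mp inferInstance
  have h₂₁ : Function.Exact (Q.complex.d 2 1).hom (Q.complex.d 1 0).hom :=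
    LinearMap.exact_iff.mpr ((HomologicalComplex.exactAt_iff' _ 2 1 0 (by simp) (by simp)).mp
      (Q.complex_exactAt_succ 0)).moduleCat_range_eq_ker.symm
  have h₁₀ : Function.Exact (Q.complex.d 1 0).hom (Q.π.f 0).hom :=
    LinearMap.exact_iff.mpr Q.exact₀.moduleCat_range_eq_ker.symm
  rw [extVanishes_one_iff_of_projectiveResolution Q, ← homsFromKerExtend_iff_of_exact h₂₁ h₁₀]
  exact ⟨(·.of_projective hπ hε), (·.of_projective hε hπ)⟩

theorem extVanishes_one_pi {ι : Type} [Fintype ι] [DecidableEq ι] {M : ι → Type}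
    [∀ i, AddCommGroup (M i)] [∀ i, Module R (M i)] (h : ∀ i, ExtVanishes R 1 (M i) C) :
    ExtVanishes R 1 (∀ i, M i) C := by
  let ε i : (M i →₀ R) →ₗ[R] M i := Finsupp.linearCombination R id
  have hε i : Function.Surjective (ε i) :=
    Finsupp.linearCombination_surjective R Function.surjective_id
  have hπ : Function.Surjective (LinearMap.piMap ε) := Function.Surjective.piMap hε
  refine (extVanishes_one_iff_homsFromKerExtend hπ).mpr ?_
  exact HomsFromKerExtend.piMap fun i => (extVanishes_one_iff_homsFromKerExtend (hε i)).mp (h i)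

theorem extVanishes_one_of_exact {M V N : Type} [AddCommGroup M] [Module R M]
    [AddCommGroup V] [Module R V] [AddCommGroup N] [Module R N]
    {f : M →ₗ[R] V} {g : V →ₗ[R] N} (hf : Function.Injective f) (hfg : Function.Exact f g)
    (hg : Function.Surjective g) (hres : Function.Surjective (LinearMap.lcomp R C f))
    (hV : ExtVanishes R 1 V C) : ExtVanishes R 1 N C := by
  let p : (V →₀ R) →ₗ[R] V := Finsupp.linearCombination R id
  have hp : Function.Surjective p := Finsupp.linearCombination_surjective R Function.surjective_id
  have hq : Function.Surjective (g ∘ₗ p) := hg.comp hp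
  rw [extVanishes_one_iff_homsFromKerExtend hq]
  exact ((extVanishes_one_iff_homsFromKerExtend hp).mp hV).comp hf hfg hres hp

end PresentationCriterion

section Torsionfree

variable {R : Type} [CommRing R] {C : Type} [AddCommGroup C] [Module R C]
  {M : Type} [AddCommGroup M] [Module R M]

theorem injective_evalMap_of_injective {X : Type} [AddCommGroup X] [Module R X]
    (hX : MemAddC R C X) {f : M →ₗ[R] X} (hf : Function.Injective f) :
    Function.Injective (evalMap R C M) := by
  obtain ⟨k, u, v, hvu⟩ := hX
  rw [injective_iff_map_eq_zero]
  intro x hx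
  have hux : u (f x) = 0 := funext fun i =>
    LinearMap.congr_fun hx (LinearMap.proj (R := R) (φ := fun _ : Fin k => C) i ∘ₗ u ∘ₗ f)
  apply hf
  rw [map_zero, ← LinearMap.id_apply (R := R) (f x), ← hvu, LinearMap.comp_apply, hux, map_zero]

theorem injective_of_surjective_lcomp {V : Type} [AddCommGroup V] [Module R V]
    (hM : Function.Injective (evalMap R C M)) {f : M →ₗ[R] V}
    (hres : Function.Surjective (LinearMap.lcomp R C f)) : Function.Injective f := by
  rw [injective_iff_map_eq_zero]
  intro x hx
  apply hM
  rw [map_zero]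
  ext χ
  obtain ⟨θ, rfl⟩ := hres χ
  show θ (f x) = 0
  rw [hx, map_zero]

theorem exists_linearMap_pi_surjective_lcomp [IsNoetherianRing R] [Module.Finite R C]
    [Module.Finite R M] :
    ∃ (n : ℕ) (f : M →ₗ[R] Fin n → C), Function.Surjective (LinearMap.lcomp R C f) := by
  obtain ⟨n, φ, hφ⟩ := Module.Finite.exists_fin (R := R) (M := M →ₗ[R] C)
  refine ⟨n, LinearMap.pi φ, fun χ => ?_⟩
  have hχ : χ ∈ Submodule.span R (Set.range φ) := hφ ▸ Submodule.mem_top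
  obtain ⟨c, rfl⟩ := (Submodule.mem_span_range_iff_exists_fun R).mp hχ
  exact ⟨∑ i, c i • LinearMap.proj i, by ext x; simp⟩

end Torsionfree

/-- Suppose `Ext^1_R(C,C) = 0`. Then a finitely generated module `M` is `1`-`C`-torsionfree
iff there is a short exact sequence `0 → M → C₀ → N → 0` with `C₀ ∈ add C` and
`Ext^1_R(N,C) = 0`. -/
theorem statement5 (R : Type) [CommRing R] [IsNoetherianRing R]
    (C : Type) [AddCommGroup C] [Module R C] [Module.Finite R C]
    (hC : ExtVanishes R 1 C C)
    (M : Type) [AddCommGroup M] [Module R M] [Module.Finite R M] :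
    IsCTorsionfree R C M 1 ↔
      ∃ (C₀ N : ModuleCat.{0} R) (f : M →ₗ[R] ↥C₀) (g : ↥C₀ →ₗ[R] ↥N),
        Module.Finite R ↥N ∧ MemAddC R C ↥C₀ ∧
        Function.Injective f ∧ Function.Exact f g ∧ Function.Surjective g ∧
        ExtVanishes R 1 ↥N C := by
  constructor
  · intro hM
    obtain ⟨n, f, hres⟩ := exists_linearMap_pi_surjective_lcomp (R := R) (C := C) (M := M)
    have hf : Function.Injective f := injective_of_surjective_lcomp hM hres
    have hexact := LinearMap.exact_map_mkQ_range f
    have hmkQ := (LinearMap.range f).mkQ_surjective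
    refine ⟨.of R (Fin n → C), .of R (_ ⧸ LinearMap.range f), f, (LinearMap.range f).mkQ,
      inferInstance, ⟨n, .id, .id, rfl⟩, hf, hexact, hmkQ, ?_⟩
    exact extVanishes_one_of_exact hf hexact hmkQ hres (extVanishes_one_pi fun _ => hC)
  · rintro ⟨C₀, N, f, -, -, hC₀, hf, -⟩
    exact injective_evalMap_of_injective hC₀ hf
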